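/- arXiv:2506.17987 — 5 statements merged into one kernel-verified Lean document; each statement's English description precedes it below -/
import Mathlib

section
/- Let (R,m) be a Cohen-Macaulay local ring admitting a canonical module ω_R. If trace_R(ω_R) is a radical ideal of R, then for every prime ideal p of R, trace_{R_p}(ω_{R_p}) is a radical ideal of R_p (i.e., R is CTR). -/
open CategoryTheory

/-- `extModule R M N i` is `Ext^i_R(M, N)` as an `R`-module (object of `ModuleCat R`). -/
noncomputable def extModule (R : Type) [CommRing R] (M N : Type) [AddCommGroup M] [Module R M]
    [AddCommGroup N] [Module R N] (i : ℕ) : ModuleCat R :=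
  ((Ext R (ModuleCat R) i).obj (Opposite.op (ModuleCat.of R M))).obj (ModuleCat.of R N)

/-- The trace ideal of a module: the sum of the images of all homomorphisms `M →ₗ[R] R`. -/
def traceIdeal (R : Type) [CommRing R] (M : Type) [AddCommGroup M] [Module R M] : Ideal R :=
  ⨆ f : M →ₗ[R] R, LinearMap.range f

/-- `ω` is a canonical module of the local ring `R`: it is finitely generated,
`Ext^i_R(k, ω) = 0` for `i ≠ dim R` and `Ext^{dim R}_R(k, ω) ≅ k`, where `k` is the
residue field. -/
def IsCanonicalModuleLocal (R : Type) [CommRing R] [IsLocalRing R] (ω : Type) [AddCommGroup ω]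
    [Module R ω] : Prop :=
  Module.Finite R ω ∧ ∀ i : ℕ,
    (((i : WithBot ℕ∞) = ringKrullDim R) →
      Nonempty (extModule R (IsLocalRing.ResidueField R) ω i ≅
        ModuleCat.of R (IsLocalRing.ResidueField R))) ∧
    (((i : WithBot ℕ∞) ≠ ringKrullDim R) →
      Subsingleton (extModule R (IsLocalRing.ResidueField R) ω i))

/-- A Noetherian local ring is Cohen–Macaulay iff `Ext^i_R(k, R) = 0` for all `i < dim R`
(depth equals dimension). -/
def IsCohenMacaulayLocal (R : Type) [CommRing R] [IsLocalRing R] : Prop :=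
  ∀ i : ℕ, ((i : WithBot ℕ∞) < ringKrullDim R) →
    Subsingleton (extModule R (IsLocalRing.ResidueField R) R i)

/-- A Noetherian local ring is Gorenstein iff it is Cohen–Macaulay and is its own
canonical module. -/
def IsGorensteinLocal (R : Type) [CommRing R] [IsLocalRing R] : Prop :=
  IsCohenMacaulayLocal R ∧ IsCanonicalModuleLocal R R

/-- A ring is Cohen–Macaulay if all its localizations at primes are Cohen–Macaulay local. -/
def IsCohenMacaulayRing (R : Type) [CommRing R] : Prop :=
  ∀ (p : Ideal R) (hp : p.IsPrime), haveI := hp; IsCohenMacaulayLocal (Localization.AtPrime p)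

/-- `ω` is a canonical module of `R`: it is finitely generated and localizes to a canonical
module at every maximal ideal. -/
def IsCanonicalModule (R : Type) [CommRing R] (ω : Type) [AddCommGroup ω] [Module R ω] : Prop :=
  Module.Finite R ω ∧ ∀ (p : Ideal R) (hp : p.IsMaximal),
    haveI := hp.isPrime
    IsCanonicalModuleLocal (Localization.AtPrime p) (LocalizedModule p.primeCompl ω)

/-- A Cohen–Macaulay ring is CTR (canonical trace radical) if each localization at a prime
admits a canonical module whose trace ideal is a radical ideal. -/
def IsCTR (R : Type) [CommRing R] : Prop :=
  IsCohenMacaulayRing R ∧ ∀ (p : Ideal R) (hp : p.IsPrime),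
    haveI := hp
    ∃ (ω : Type) (_ : AddCommGroup ω) (_ : Module (Localization.AtPrime p) ω),
      IsCanonicalModuleLocal (Localization.AtPrime p) ω ∧
        (traceIdeal (Localization.AtPrime p) ω).IsRadical

lemma traceIdeal_localization (R : Type) [CommRing R] [IsNoetherianRing R]
    (M : Type) [AddCommGroup M] [Module R M] [Module.Finite R M] (S : Submonoid R) :
    traceIdeal (Localization S) (LocalizedModule S M) =
      (traceIdeal R M).map (algebraMap R (Localization S)) := by
  have : Module.FinitePresentation R M := Module.finitePresentation_of_finite R M
  set Rₛ := Localization S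
  set T := IsLocalizedModule.mapExtendScalars S (LocalizedModule.mkLinearMap S M)
      (Algebra.linearMap R Rₛ) Rₛ with hT
  apply le_antisymm
  · refine iSup_le fun g => ?_
    rintro x ⟨y, rfl⟩
    obtain ⟨⟨h, s⟩, hs⟩ := IsLocalizedModule.surj S T g
    have key : T h y ∈ (traceIdeal R M).map (algebraMap R Rₛ) := by
      obtain ⟨⟨m, t⟩, rfl⟩ := IsLocalizedModule.mk'_surjective S
        (LocalizedModule.mkLinearMap S M) y
      have h1 : T h (IsLocalizedModule.mk' (LocalizedModule.mkLinearMap S M) m t)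
          = IsLocalizedModule.mk' (Algebra.linearMap R Rₛ) (h m) t := by
        simp [hT, IsLocalizedModule.mapExtendScalars]
      simp only [Function.uncurry_apply_pair]
      rw [h1, ← Ideal.unit_mul_mem_iff_mem _ (IsLocalization.map_units Rₛ t),
        ← Algebra.smul_def, ← Submonoid.smul_def, IsLocalizedModule.mk'_cancel']
      exact Ideal.mem_map_of_mem _
        (Submodule.mem_iSup_of_mem h (LinearMap.mem_range_self h m))
    have h2 : T h y = algebraMap R Rₛ s * g y := by
      rw [← hs]; simp [Submonoid.smul_def, Algebra.smul_def]; rfl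
    rw [h2, Ideal.unit_mul_mem_iff_mem _ (IsLocalization.map_units Rₛ s)] at key
    exact key
  · rw [Ideal.map_le_iff_le_comap]
    refine iSup_le fun f => ?_
    rintro x ⟨m, rfl⟩
    show algebraMap R Rₛ (f m) ∈ traceIdeal Rₛ (LocalizedModule S M)
    refine Submodule.mem_iSup_of_mem (T f) ⟨LocalizedModule.mkLinearMap S M m, ?_⟩
    have := IsLocalizedModule.map_apply S (LocalizedModule.mkLinearMap S M)
      (Algebra.linearMap R Rₛ) f m
    exact this

lemma isRadical_map_localization {R : Type} [CommRing R] (S : Submonoid R)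
    {I : Ideal R} (hI : I.IsRadical) :
    (I.map (algebraMap R (Localization S))).IsRadical := by
  rintro x ⟨n, hn⟩
  obtain ⟨⟨r, s⟩, rfl⟩ := IsLocalization.mk'_surjective S x
  rcases Nat.eq_zero_or_pos n with rfl | hn1
  · rw [pow_zero] at hn
    have : I.map (algebraMap R (Localization S)) = ⊤ := (Ideal.eq_top_iff_one _).mpr hn
    rw [this]; trivial
  · rw [← IsLocalization.mk'_pow] at hn
    obtain ⟨u, hu, hur⟩ := (IsLocalization.mk'_mem_map_algebraMap_iff S _ I _ _).mp hn
    have hun : (u * r) ^ n ∈ I := by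
      have : (u * r) ^ n = u ^ (n - 1) * (u * r ^ n) := by
        rw [mul_pow, ← mul_assoc, ← pow_succ, Nat.sub_add_cancel hn1]
      rw [this]; exact I.mul_mem_left _ hur
    exact (IsLocalization.mk'_mem_map_algebraMap_iff S _ I r s).mpr
      ⟨u, hu, hI ⟨n, hun⟩⟩

/-- If `(R,m)` is a Cohen–Macaulay local ring with canonical module `ω` whose trace ideal is
radical, then the trace of the canonical module of every localization `R_p` is radical,
i.e. `R` is CTR. -/
theorem isCTR_of_trace_isRadical_local
    (R : Type) [CommRing R] [IsNoetherianRing R] [IsLocalRing R]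
    (hCM : IsCohenMacaulayLocal R)
    (ω : Type) [AddCommGroup ω] [Module R ω] (hω : IsCanonicalModuleLocal R ω)
    (hrad : (traceIdeal R ω).IsRadical) :
    ∀ (p : Ideal R) (hp : p.IsPrime),
      haveI := hp
      (traceIdeal (Localization.AtPrime p) (LocalizedModule p.primeCompl ω)).IsRadical := by
  intro p hp
  have : Module.Finite R ω := hω.1
  rw [traceIdeal_localization R ω p.primeCompl]
  exact isRadical_map_localization _ hrad
end

section
/- Let (R,m) → (S,n) be a flat local homomorphism of Noetherian local rings, where R admits a canonical module ω_R and S/mS is Gorenstein. If S is CTR (equivalently trace_S(ω_S) is radical), then R is CTR (equivalently trace_R(ω_R) is radical). -/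
open CategoryTheory

section Aux

variable {R S : Type} [CommRing R] [CommRing S] [Algebra R S]

/-- Each element of a finitely supported function is a sum of coordinates times basis vectors. -/
lemma finsupp_eq_sum_smul_single {κ : Type} [Fintype κ] (v : κ →₀ R) :
    v = ∑ j : κ, v j • Finsupp.single j (1 : R) := by
  ext j
  simp [Finsupp.single_apply, Finset.sum_apply']

end Aux

section Aux2

variable (R S : Type) [CommRing R] [CommRing S] [Algebra R S]


/-- Contraction of the extension of an ideal along a flat local map is itself. -/
lemma mem_of_algebraMap_mem_map [Module.Flat R S] [IsLocalRing R] [IsLocalRing S]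
    (hloc : IsLocalHom (algebraMap R S)) (I : Ideal R) (x : R)
    (hx : algebraMap R S x ∈ I.map (algebraMap R S)) : x ∈ I := by
  classical
  rw [Ideal.map, ← Submodule.span_eq (Ideal.span _), Submodule.span_coe_eq_restrictScalars,
    Submodule.restrictScalars_self] at hx
  rw [Ideal.span, Submodule.mem_span_set] at hx
  obtain ⟨c, hsupp, hsum⟩ := hx
  -- choose preimages in I for elements of the support
  have hpre : ∀ t : {t : S // t ∈ c.support}, ∃ a : R, a ∈ I ∧ algebraMap R S a = t.1 := by
    rintro ⟨t, ht⟩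
    obtain ⟨a, ha, rfl⟩ := hsupp ht
    exact ⟨a, ha, rfl⟩
  choose a ha hfa using hpre
  set ι := Option {t : S // t ∈ c.support} with hι
  let r : ι → R := fun i => i.elim x a
  let y : ι → S := fun i => i.elim (-1) (fun t => c t.1)
  have hrel : ∑ i : ι, r i • y i = 0 := by
    rw [univ_option]
    rw [Finset.sum_insertNone]
    have h1 : ∑ t : {t : S // t ∈ c.support}, r (some t) • y (some t) = algebraMap R S x := by
      have : ∀ t : {t : S // t ∈ c.support}, r (some t) • y (some t) = c t.1 * t.1 := by
        intro t
        simp only [r, y, Option.elim, Algebra.smul_def, hfa]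
        ring
      rw [Finset.sum_congr rfl (fun t _ => this t), ← hsum, Finsupp.sum]
      simpa [smul_eq_mul] using Finset.sum_coe_sort c.support (fun t => c t * t)
    rw [h1]
    simp [r, y, Algebra.smul_def]
  obtain ⟨κ, A, yk, hA1, hA2⟩ :=
    Module.Flat.isTrivialRelation_of_sum_smul_eq_zero (R := R) (M := S) hrel
  -- each x * A none j ∈ I
  have hxA : ∀ j, x * A none j ∈ I := by
    intro j
    have h2 := hA2 j
    rw [univ_option, Finset.sum_insertNone] at h2
    have h3 : x * A none j = -∑ t : {t : S // t ∈ c.support}, r (some t) * A (some t) j :=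
      eq_neg_of_add_eq_zero_left h2
    rw [h3]
    exact Submodule.neg_mem _ (Submodule.sum_mem _ (fun t _ =>
      Ideal.mul_mem_right _ _ (ha t)))
  -- some A none j is a unit
  have hunit : ∃ j, IsUnit (A none j) := by
    by_contra hall
    push_neg at hall
    have h1 := hA1 none
    have : (-1 : S) ∈ IsLocalRing.maximalIdeal S := by
      have : y none = -1 := rfl
      rw [← this, h1]
      refine Submodule.sum_mem _ (fun j _ => ?_)
      rw [Algebra.smul_def]
      refine Ideal.mul_mem_right _ _ ?_
      rw [IsLocalRing.mem_maximalIdeal, mem_nonunits_iff]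
      intro hu
      exact hall j (hloc.map_nonunit _ hu)
    have h1mem : (1 : S) ∈ IsLocalRing.maximalIdeal S := by
      simpa using Submodule.neg_mem _ this
    exact (IsLocalRing.maximalIdeal.isMaximal S).ne_top ((Ideal.eq_top_iff_one _).2 h1mem)
  obtain ⟨j₀, hu⟩ := hunit
  obtain ⟨u, hu⟩ := hu
  have : x = (x * A none j₀) * ↑u⁻¹ := by
    rw [← hu, mul_assoc, Units.mul_inv, mul_one]
  rw [this]
  exact Ideal.mul_mem_right _ _ (hxA j₀)

end Aux2

section Aux3

variable (R S : Type) [CommRing R] [CommRing S] [Algebra R S]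

lemma map_trace_le (ω : Type) [AddCommGroup ω] [Module R ω] :
    (traceIdeal R ω).map (algebraMap R S) ≤ traceIdeal S (TensorProduct R S ω) := by
  rw [traceIdeal, Ideal.map_iSup]
  refine iSup_le fun g => ?_
  rw [Ideal.map_le_iff_le_comap]
  rintro _ ⟨m, rfl⟩
  show algebraMap R S (g m) ∈ traceIdeal S (TensorProduct R S ω)
  let h₀ : TensorProduct R S ω →ₗ[S] S :=
    (TensorProduct.AlgebraTensorModule.rid R S S).toLinearMap ∘ₗ LinearMap.baseChange S g
  have hval : algebraMap R S (g m) = h₀ ((1 : S) ⊗ₜ[R] m) := by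
    simp only [h₀, LinearMap.coe_comp, Function.comp_apply, LinearEquiv.coe_coe,
      LinearMap.baseChange_tmul, TensorProduct.AlgebraTensorModule.rid_tmul,
      Algebra.algebraMap_eq_smul_one]
  rw [hval]
  exact le_iSup (fun h : TensorProduct R S ω →ₗ[S] S => LinearMap.range h) h₀
    (LinearMap.mem_range_self _ _)

lemma trace_le_map [Module.Flat R S] (ω : Type) [AddCommGroup ω] [Module R ω]
    [Module.FinitePresentation R ω] :
    traceIdeal S (TensorProduct R S ω) ≤ (traceIdeal R ω).map (algebraMap R S) := by
  refine iSup_le fun h => ?_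
  rintro _ ⟨t, rfl⟩
  have key : ∀ m : ω, h ((1 : S) ⊗ₜ[R] m) ∈ (traceIdeal R ω).map (algebraMap R S) := by
    intro m
    let φ : ω →ₗ[R] S := (h.restrictScalars R) ∘ₗ (TensorProduct.mk R S ω) 1
    obtain ⟨κ, h₂, h₃, hfac⟩ :=
      Module.Flat.exists_factorization_of_isFinitelyPresented (R := R) (M := S) φ
    have h0 : h ((1 : S) ⊗ₜ[R] m) = φ m := rfl
    rw [h0, hfac]
    show h₃ (h₂ m) ∈ _
    rw [finsupp_eq_sum_smul_single (h₂ m), map_sum]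
    refine Submodule.sum_mem _ fun j _ => ?_
    rw [map_smul, Algebra.smul_def]
    refine Ideal.mul_mem_right _ _ (Ideal.mem_map_of_mem _ ?_)
    exact le_iSup (fun g : ω →ₗ[R] R => LinearMap.range g)
      ((Finsupp.lapply j) ∘ₗ h₂) ⟨m, rfl⟩
  induction t with
  | zero => simpa using Ideal.zero_mem _
  | tmul s m =>
    have hsm : (s ⊗ₜ[R] m : TensorProduct R S ω) = s • ((1 : S) ⊗ₜ[R] m) := by
      rw [TensorProduct.smul_tmul', smul_eq_mul, mul_one]
    rw [hsm, map_smul, smul_eq_mul]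
    exact Ideal.mul_mem_left _ _ (key m)
  | add a b ha hb => rw [map_add]; exact Ideal.add_mem _ ha hb

end Aux3

/-- Descent of CTR along a flat local homomorphism with Gorenstein closed fibre:
if `R → S` is a flat local homomorphism of Noetherian local rings, `R` is Cohen–Macaulay
with canonical module `ω`, `S/mS` is Gorenstein (so `ω_S = ω ⊗_R S`), and
`trace_S(ω_S)` is radical (`S` is CTR), then `trace_R(ω)` is radical (`R` is CTR). -/
theorem trace_isRadical_of_flat_local_descent
    (R S : Type) [CommRing R] [CommRing S] [IsNoetherianRing R] [IsNoetherianRing S]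
    [IsLocalRing R] [IsLocalRing S] [Algebra R S] [Module.Flat R S]
    (hloc : IsLocalHom (algebraMap R S))
    (hCM : IsCohenMacaulayLocal R)
    (ω : Type) [AddCommGroup ω] [Module R ω] (hω : IsCanonicalModuleLocal R ω)
    [IsLocalRing (S ⧸ (IsLocalRing.maximalIdeal R).map (algebraMap R S))]
    (hGor : IsGorensteinLocal (S ⧸ (IsLocalRing.maximalIdeal R).map (algebraMap R S)))
    (hS : (traceIdeal S (TensorProduct R S ω)).IsRadical) :
    (traceIdeal R ω).IsRadical := by
  haveI : Module.Finite R ω := hω.1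
  haveI : Module.FinitePresentation R ω := Module.finitePresentation_of_finite R ω
  intro x hx
  obtain ⟨n, hn⟩ := hx
  have h1 : algebraMap R S x ∈ (traceIdeal S (TensorProduct R S ω)).radical :=
    ⟨n, by rw [← map_pow]; exact map_trace_le R S ω (Ideal.mem_map_of_mem _ hn)⟩
  have h2 := hS h1
  have h3 := trace_le_map R S ω h2
  exact mem_of_algebraMap_mem_map R S hloc _ x h3
end

section
/- Let (R,m) → (S,n) be a flat local homomorphism of Noetherian local rings with R Cohen-Macaulay admitting a canonical module and S/mS Gorenstein. If trace_R(ω_R) is a radical ideal and for every minimal prime p of trace_R(ω_R) the fiber ring κ(p) ⊗_R S is reduced, then trace_S(ω_S) is a radical ideal. -/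
open CategoryTheory

section AuxCTR
open TensorProduct

section Dot

variable {R : Type} [CommRing R] {k : ℕ}

noncomputable def dotL (c : Fin k → R) : (Fin k → R) →ₗ[R] R :=
  ∑ i, c i • LinearMap.proj i

lemma dotL_apply (c u : Fin k → R) : dotL c u = ∑ i, c i * u i := by
  simp [dotL, LinearMap.sum_apply]

lemma dotL_comm (c u : Fin k → R) : dotL c u = dotL u c := by
  simp [dotL_apply, mul_comm]

lemma dotL_single (c : Fin k → R) (i : Fin k) : dotL c (Pi.single i 1) = c i := by
  simp [dotL_apply, Pi.single_apply]

end Dot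

section Expand

variable {R S : Type} [CommRing R] [CommRing S] [Algebra R S] {k : ℕ}

lemma one_tmul_eq_sum (v : Fin k → R) :
    (1 : S) ⊗ₜ[R] v = ∑ i, v i • ((1 : S) ⊗ₜ[R] Pi.single i (1 : R)) := by
  conv_lhs => rw [← Finset.univ_sum_single v]
  rw [tmul_sum]
  refine Finset.sum_congr rfl fun i _ => ?_
  have h : (Pi.single i (v i) : Fin k → R) = v i • (Pi.single i 1 : Fin k → R) := by
    rw [← Pi.single_smul, smul_eq_mul, mul_one]
  rw [h, tmul_smul]

end Expand

section Trace

variable {R S : Type} [CommRing R] [CommRing S] [Algebra R S]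
  [IsNoetherianRing R] [Module.Flat R S]
  {ω : Type} [AddCommGroup ω] [Module R ω] [Module.Finite R ω]

lemma key_mem (g : (S ⊗[R] ω) →ₗ[S] S) (x : ω) :
    g ((1 : S) ⊗ₜ[R] x) ∈ (traceIdeal R ω).map (algebraMap R S) := by
  classical
  set J := traceIdeal R ω with hJ
  obtain ⟨n, π, hπ⟩ := Module.Finite.exists_fin' R ω
  haveI : Module.Finite R (LinearMap.ker π) :=
    ⟨(Submodule.fg_top _).mpr (IsNoetherian.noetherian _)⟩
  obtain ⟨m, δ', hδ'⟩ := Module.Finite.exists_fin' R (LinearMap.ker π)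
  set δ : (Fin m → R) →ₗ[R] (Fin n → R) := (LinearMap.ker π).subtype ∘ₗ δ' with hδdef
  set en : Fin n → (Fin n → R) := fun i => Pi.single i 1 with hen
  set em : Fin m → (Fin m → R) := fun j => Pi.single j 1 with hem
  have hexactδ : LinearMap.range δ = LinearMap.ker π := by
    rw [hδdef, LinearMap.range_comp, LinearMap.range_eq_top.mpr hδ', Submodule.map_top,
      Submodule.range_subtype]
  set θ : (Fin n → R) →ₗ[R] (Fin m → R) :=
    LinearMap.pi (fun j => dotL (δ (em j))) with hθdef
  set Φ : (S ⊗[R] (Fin n → R)) →ₗ[S] S := g ∘ₗ π.baseChange S with hΦdef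
  -- Φ vanishes on 1 ⊗ range δ
  have hΦδ : ∀ w : Fin m → R, Φ ((1:S) ⊗ₜ[R] δ w) = 0 := by
    intro w
    have h0 : π (δ w) = 0 := by
      have : δ w ∈ LinearMap.ker π := hexactδ ▸ LinearMap.mem_range_self δ w
      exact this
    simp [hΦdef, LinearMap.baseChange_tmul, h0]
  set s : S ⊗[R] (Fin n → R) :=
    ∑ i, Φ ((1:S) ⊗ₜ[R] en i) • ((1:S) ⊗ₜ[R] en i) with hsdef
  have hθen : ∀ i, θ (en i) = fun j => δ (em j) i := by
    intro i
    funext j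
    simp [hθdef, LinearMap.pi_apply, hen, dotL_single]
  have hθs : θ.baseChange S s = 0 := by
    rw [hsdef, map_sum]
    have step : ∀ i, (θ.baseChange S) (Φ ((1:S) ⊗ₜ[R] en i) • ((1:S) ⊗ₜ[R] en i))
        = ∑ j, δ (em j) i • (Φ ((1:S) ⊗ₜ[R] en i) • ((1:S) ⊗ₜ[R] em j)) := by
      intro i
      rw [map_smul, LinearMap.baseChange_tmul, hθen i,
        one_tmul_eq_sum (S := S) (fun j => δ (em j) i), Finset.smul_sum]
      exact Finset.sum_congr rfl fun j _ => smul_comm _ _ _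
    rw [Finset.sum_congr rfl fun i _ => step i, Finset.sum_comm]
    refine Finset.sum_eq_zero fun j _ => ?_
    have collect : ∑ i, δ (em j) i • (Φ ((1:S) ⊗ₜ[R] en i) • ((1:S) ⊗ₜ[R] em j))
        = Φ ((1:S) ⊗ₜ[R] δ (em j)) • ((1:S) ⊗ₜ[R] em j) := by
      rw [one_tmul_eq_sum (S := S) (δ (em j)), map_sum, Finset.sum_smul]
      exact Finset.sum_congr rfl fun i _ => by
        rw [LinearMap.map_smul_of_tower, smul_assoc]
    rw [collect, hΦδ, zero_smul]
  -- flat exactness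
  have hexact2 : Function.Exact ((LinearMap.ker θ).subtype.lTensor S) (θ.lTensor S) :=
    Module.Flat.lTensor_exact S (LinearMap.exact_subtype_ker_map θ)
  have hs0 : θ.lTensor S s = 0 := by
    rw [← LinearMap.baseChange_eq_ltensor]; exact hθs
  obtain ⟨σ, hσ⟩ := (hexact2 s).mp hs0
  obtain ⟨T, hT⟩ := TensorProduct.exists_finset σ
  -- factorization through ω for elements of ker θ
  have hker : ∀ a : LinearMap.ker θ, LinearMap.ker π ≤ LinearMap.ker (dotL (a : Fin n → R)) := by
    intro a c hc
    rw [← hexactδ] at hc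
    obtain ⟨w, rfl⟩ := hc
    have hw : δ w = ∑ j, w j • δ (em j) := by
      conv_lhs => rw [← Finset.univ_sum_single w]
      rw [map_sum]
      refine Finset.sum_congr rfl fun j _ => ?_
      have h1 : (Pi.single j (w j) : Fin m → R) = w j • em j := by
        simp only [hem]
        rw [← Pi.single_smul, smul_eq_mul, mul_one]
      rw [h1, map_smul]
    have hθa : θ (a : Fin n → R) = 0 := LinearMap.mem_ker.mp a.2
    rw [LinearMap.mem_ker, hw, map_sum]
    refine Finset.sum_eq_zero fun j _ => ?_
    rw [map_smul, smul_eq_mul]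
    have h2 : dotL (a : Fin n → R) (δ (em j)) = θ (a : Fin n → R) j := by
      rw [dotL_comm]
      rfl
    rw [h2, hθa]
    simp
  -- the linear functionals on ω
  set e := π.quotKerEquivOfSurjective hπ with hedef
  set fa : LinearMap.ker θ → (ω →ₗ[R] R) := fun a =>
    ((LinearMap.ker π).liftQ (dotL (a : Fin n → R)) (hker a)) ∘ₗ e.symm.toLinearMap with hfadef
  have hfa : ∀ (a : LinearMap.ker θ) (u : Fin n → R), fa a (π u) = dotL (a : Fin n → R) u := by
    intro a u
    have he : e (Submodule.Quotient.mk u) = π u := by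
      simp [hedef, LinearMap.quotKerEquivOfSurjective, LinearMap.quotKerEquivRange_apply_mk]
    have he2 : e.symm (π u) = Submodule.Quotient.mk u := by
      rw [LinearEquiv.symm_apply_eq, he]
    simp [hfadef, he2, Submodule.liftQ_apply]
  have hfaJ : ∀ (a : LinearMap.ker θ), ∀ y : ω, fa a y ∈ J := by
    intro a y
    exact (le_iSup (fun f : ω →ₗ[R] R => LinearMap.range f) (fa a)) ⟨y, rfl⟩
  -- evaluation map
  obtain ⟨u, hu⟩ := hπ x
  set E : (S ⊗[R] (Fin n → R)) →ₗ[S] S :=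
    (TensorProduct.AlgebraTensorModule.rid R S S).toLinearMap ∘ₗ (dotL u).baseChange S with hEdef
  have hE : ∀ (t : S) (v : Fin n → R), E (t ⊗ₜ[R] v) = dotL u v • t := by
    intro t v
    simp [hEdef, LinearMap.baseChange_tmul]
  -- two evaluations of E s
  have h1 : E s = Φ ((1:S) ⊗ₜ[R] u) := by
    rw [hsdef, map_sum, one_tmul_eq_sum (S := S) u, map_sum]
    refine Finset.sum_congr rfl fun i _ => ?_
    rw [LinearMap.map_smul, hE, LinearMap.map_smul_of_tower]
    have h4 : dotL u (en i) = u i := by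
      simp only [hen]; exact dotL_single u i
    rw [h4, smul_comm, smul_eq_mul, mul_one]
  have h2 : E s ∈ Ideal.map (algebraMap R S) J := by
    rw [← hσ, hT, map_sum, map_sum]
    refine Ideal.sum_mem _ fun p hp => ?_
    rw [LinearMap.lTensor_tmul, hE]
    have hmem : dotL u (p.2 : Fin n → R) ∈ J := by
      have h5 : dotL u (p.2 : Fin n → R) = fa p.2 x := by
        rw [dotL_comm, ← hu, hfa]
      rw [h5]; exact hfaJ p.2 x
    rw [Algebra.smul_def]
    exact Ideal.mul_mem_right _ _ (Ideal.mem_map_of_mem _ hmem)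
  have h3 : g ((1:S) ⊗ₜ[R] x) = Φ ((1:S) ⊗ₜ[R] u) := by
    rw [hΦdef]
    simp [LinearMap.baseChange_tmul, hu]
  rw [h3, ← h1]
  exact h2

end Trace

section Trace2

variable {R S : Type} [CommRing R] [CommRing S] [Algebra R S]
  [IsNoetherianRing R] [Module.Flat R S]
  {ω : Type} [AddCommGroup ω] [Module R ω] [Module.Finite R ω]

lemma traceIdeal_baseChange :
    traceIdeal S (S ⊗[R] ω) = (traceIdeal R ω).map (algebraMap R S) := by
  apply le_antisymm
  · refine iSup_le fun g => ?_
    rintro _ ⟨z, rfl⟩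
    induction z using TensorProduct.induction_on with
    | zero => simp
    | add a b ha hb =>
      rw [map_add]
      exact Ideal.add_mem _ ha hb
    | tmul t x =>
      have h : (t ⊗ₜ[R] x : S ⊗[R] ω) = t • ((1:S) ⊗ₜ[R] x) := by
        rw [TensorProduct.smul_tmul', smul_eq_mul, mul_one]
      rw [h, map_smul]
      exact Submodule.smul_mem _ t (key_mem g x)
  · rw [Ideal.map_le_iff_le_comap]
    intro j hj
    rw [Ideal.mem_comap]
    refine Submodule.iSup_induction (motive := fun y => algebraMap R S y ∈ traceIdeal S (S ⊗[R] ω))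
      (fun f : ω →ₗ[R] R => LinearMap.range f) hj ?_ ?_ ?_
    · rintro f _ ⟨y, rfl⟩
      set F : (S ⊗[R] ω) →ₗ[S] S :=
        (TensorProduct.AlgebraTensorModule.rid R S S).toLinearMap ∘ₗ f.baseChange S with hF
      have h2 : algebraMap R S (f y) = F ((1:S) ⊗ₜ[R] y) := by
        simp [hF, LinearMap.baseChange_tmul, Algebra.algebraMap_eq_smul_one]
      rw [h2]
      exact (le_iSup (fun f : (S ⊗[R] ω) →ₗ[S] S => LinearMap.range f) F) ⟨_, rfl⟩
    · simp
    · intro a b ha hb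
      rw [map_add]
      exact Ideal.add_mem _ ha hb

end Trace2

section Reduced

variable {R S : Type} [CommRing R] [CommRing S] [Algebra R S] [Module.Flat R S]

lemma coe_map_id_eq_lTensor {A B : Type} [CommRing A] [CommRing B] [Algebra R A] [Algebra R B]
    (f : A →ₐ[R] B) :
    ⇑(Algebra.TensorProduct.map (AlgHom.id R S) f) = ⇑(LinearMap.lTensor S f.toLinearMap) := by
  funext z
  induction z using TensorProduct.induction_on with
  | zero => simp
  | tmul a b => simp
  | add a b ha hb => simp [ha, hb]

lemma isReduced_tensor_quot_of_fiber (p : Ideal R) [hp : p.IsPrime]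
    (hred : IsReduced (TensorProduct R
        (Localization.AtPrime p ⧸ IsLocalRing.maximalIdeal (Localization.AtPrime p)) S)) :
    IsReduced (S ⊗[R] (R ⧸ p)) := by
  set Rp := Localization.AtPrime p with hRp
  set κ := Rp ⧸ IsLocalRing.maximalIdeal Rp with hκ
  set φ : R →+* κ :=
    (Ideal.Quotient.mk (IsLocalRing.maximalIdeal Rp)).comp (algebraMap R Rp) with hφ
  have hkerφ : RingHom.ker φ = p := by
    rw [hφ, ← RingHom.comap_ker, Ideal.mk_ker]
    exact Localization.AtPrime.comap_maximalIdeal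
  set ψ : (R ⧸ p) →+* κ := Ideal.Quotient.lift p φ
    (fun a ha => RingHom.mem_ker.mp (hkerφ.symm ▸ ha : a ∈ RingHom.ker φ)) with hψ
  have hψinj : Function.Injective ψ := by
    rw [injective_iff_map_eq_zero]
    intro a ha
    obtain ⟨r, rfl⟩ := Ideal.Quotient.mk_surjective a
    rw [hψ, Ideal.Quotient.lift_mk] at ha
    rw [Ideal.Quotient.eq_zero_iff_mem, ← hkerφ]
    exact RingHom.mem_ker.mpr ha
  set ψₐ : (R ⧸ p) →ₐ[R] κ :=
    { ψ with
      commutes' := fun r => by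
        show ψ (Ideal.Quotient.mk p r) = algebraMap R κ r
        rw [hψ, Ideal.Quotient.lift_mk]
        rfl } with hψₐ
  haveI hred2 : IsReduced (S ⊗[R] κ) := by
    refine isReduced_of_injective (Algebra.TensorProduct.comm R S κ).toAlgHom.toRingHom ?_
    exact (Algebra.TensorProduct.comm R S κ).injective
  refine isReduced_of_injective (Algebra.TensorProduct.map (AlgHom.id R S) ψₐ).toRingHom ?_
  show Function.Injective ⇑(Algebra.TensorProduct.map (AlgHom.id R S) ψₐ)
  rw [coe_map_id_eq_lTensor]
  exact Module.Flat.lTensor_preserves_injective_linearMap _ hψinj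

end Reduced

section Reduced2

variable {R S : Type} [CommRing R] [CommRing S] [Algebra R S] [Module.Flat R S]

lemma isReduced_tensor_quot_rad [IsNoetherianRing R] (J : Ideal R) (hrad : J.IsRadical)
    (hfib : ∀ p ∈ J.minimalPrimes, IsReduced (S ⊗[R] (R ⧸ p))) :
    IsReduced (S ⊗[R] (R ⧸ J)) := by
  classical
  have hfin : J.minimalPrimes.Finite := by
    rw [Ideal.minimalPrimes_eq_comap]
    exact Set.Finite.image _ (minimalPrimes.finite_of_isNoetherianRing (R ⧸ J))
  haveI := hfin.fintype
  haveI : ∀ i : ↥J.minimalPrimes, IsReduced (S ⊗[R] (R ⧸ (i : Ideal R))) := fun i => hfib i i.2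
  set q : ∀ i : ↥J.minimalPrimes, (R ⧸ J) →ₐ[R] (R ⧸ (i : Ideal R)) := fun i =>
    { Ideal.Quotient.factor (S := J) (T := (i : Ideal R)) i.2.1.2 with
      commutes' := fun r => by
        show Ideal.Quotient.factor (S := J) (T := (i : Ideal R)) i.2.1.2 (Ideal.Quotient.mk J r) = _
        rw [Ideal.Quotient.factor_mk]
        rfl } with hq
  have happly : ∀ (i : ↥J.minimalPrimes) (r : R),
      (q i) (Ideal.Quotient.mk J r) = Ideal.Quotient.mk (i : Ideal R) r := fun i r => rfl
  have hqinj : Function.Injective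
      ⇑(LinearMap.pi (fun i : ↥J.minimalPrimes => (q i).toLinearMap)) := by
    rw [← LinearMap.ker_eq_bot]
    ext z
    simp only [LinearMap.mem_ker, Submodule.mem_bot]
    obtain ⟨r, rfl⟩ := Ideal.Quotient.mk_surjective z
    constructor
    · intro hz
      have hr : r ∈ J := by
        have hmem : r ∈ sInf J.minimalPrimes := by
          rw [Ideal.mem_sInf]
          intro p hp
          have h1 : Ideal.Quotient.mk p r = 0 := congrFun hz ⟨p, hp⟩
          exact Ideal.Quotient.eq_zero_iff_mem.mp h1
        rw [Ideal.sInf_minimalPrimes, hrad.radical] at hmem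
        exact hmem
      exact Ideal.Quotient.eq_zero_iff_mem.mpr hr
    · intro hz
      rw [hz, map_zero]
  have hnat : ∀ (z : S ⊗[R] (R ⧸ J)) (i : ↥J.minimalPrimes),
      TensorProduct.piRightHom R S S (fun i : ↥J.minimalPrimes => R ⧸ (i : Ideal R))
        ((LinearMap.pi (fun i : ↥J.minimalPrimes => (q i).toLinearMap)).lTensor S z) i
      = ((q i).toLinearMap.lTensor S) z := by
    intro z i
    induction z using TensorProduct.induction_on with
    | zero => simp
    | tmul a b => simp [TensorProduct.piRightHom_tmul, LinearMap.pi_apply]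
    | add a b ha hb => simp [ha, hb]
  set Ψ : (S ⊗[R] (R ⧸ J)) →+* ∀ i : ↥J.minimalPrimes, S ⊗[R] (R ⧸ (i : Ideal R)) :=
    Pi.ringHom (fun i => (Algebra.TensorProduct.map (AlgHom.id R S) (q i)).toRingHom) with hΨ
  have hΨinj : Function.Injective ⇑Ψ := by
    rw [injective_iff_map_eq_zero]
    intro z hz
    have h1 : (LinearMap.pi (fun i : ↥J.minimalPrimes => (q i).toLinearMap)).lTensor S z = 0 := by
      refine (LinearEquiv.map_eq_zero_iff
        (TensorProduct.piRight R S S (fun i : ↥J.minimalPrimes => R ⧸ (i : Ideal R)))).mp ?_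
      rw [TensorProduct.piRight_apply]
      funext i
      simp only [Pi.zero_apply]
      rw [hnat z i]
      have h2 : (Algebra.TensorProduct.map (AlgHom.id R S) (q i)) z = 0 := congrFun hz i
      have h3 := congrFun (coe_map_id_eq_lTensor (S := S) (q i)) z
      rw [← h3, h2]
    have h4 := Module.Flat.lTensor_preserves_injective_linearMap (M := S)
      (LinearMap.pi (fun i : ↥J.minimalPrimes => (q i).toLinearMap)) hqinj
    apply h4
    rw [h1, map_zero]
  exact isReduced_of_injective Ψ hΨinj

lemma map_isRadical_of_isReduced (J : Ideal R)
    (hredS : IsReduced (S ⊗[R] (R ⧸ J))) : (J.map (algebraMap R S)).IsRadical := by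
  rw [Ideal.isRadical_iff_quotient_reduced]
  have h0 : ∀ a ∈ J.map (algebraMap R S),
      (Algebra.TensorProduct.includeLeftRingHom : S →+* S ⊗[R] (R ⧸ J)) a = 0 := by
    have hle : J.map (algebraMap R S) ≤
        RingHom.ker (Algebra.TensorProduct.includeLeftRingHom : S →+* S ⊗[R] (R ⧸ J)) := by
      rw [Ideal.map_le_iff_le_comap]
      intro j hj
      rw [Ideal.mem_comap, RingHom.mem_ker]
      show (algebraMap R S j) ⊗ₜ[R] (1 : R ⧸ J) = 0
      rw [Algebra.algebraMap_eq_smul_one, TensorProduct.smul_tmul,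
        ← Algebra.algebraMap_eq_smul_one, Ideal.Quotient.algebraMap_eq,
        Ideal.Quotient.eq_zero_iff_mem.mpr hj, TensorProduct.tmul_zero]
    exact fun a ha => RingHom.mem_ker.mp (hle ha)
  set χ : (S ⧸ J.map (algebraMap R S)) →+* S ⊗[R] (R ⧸ J) :=
    Ideal.Quotient.lift _ Algebra.TensorProduct.includeLeftRingHom h0 with hχ
  have hχinj : Function.Injective ⇑χ := by
    rw [injective_iff_map_eq_zero]
    intro a ha
    obtain ⟨s, rfl⟩ := Ideal.Quotient.mk_surjective a
    rw [hχ, Ideal.Quotient.lift_mk] at ha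
    have hx : s ⊗ₜ[R] (1 : R ⧸ J) = 0 := ha
    have h1 : (TensorProduct.tensorQuotEquivQuotSMul S J) (s ⊗ₜ[R] (1 : R ⧸ J)) =
        Submodule.Quotient.mk s := by
      have h2 : (1 : R ⧸ J) = Ideal.Quotient.mk J 1 := rfl
      rw [h2, TensorProduct.tensorQuotEquivQuotSMul_tmul_mk, one_smul]
    have h2 : s ∈ (J • (⊤ : Submodule R S)) := by
      rw [← Submodule.Quotient.mk_eq_zero, ← h1, hx, map_zero]
    have hle : (J • (⊤ : Submodule R S)) ≤
        (Ideal.map (algebraMap R S) J).restrictScalars R := by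
      rw [Submodule.smul_le]
      intro r hr n _
      rw [Submodule.restrictScalars_mem, Algebra.smul_def]
      exact Ideal.mul_mem_right _ _ (Ideal.mem_map_of_mem _ hr)
    exact Ideal.Quotient.eq_zero_iff_mem.mpr (hle h2)
  exact isReduced_of_injective χ hχinj

end Reduced2

end AuxCTR

/-- Ascent of CTR along a flat local homomorphism with Gorenstein closed fibre and reduced
fibres over the minimal primes of the trace: if `R → S` is a flat local homomorphism of
Noetherian local rings, `R` Cohen–Macaulay with canonical module `ω`, `S/mS` Gorenstein
(so `ω_S = ω ⊗_R S`), `trace_R(ω)` is radical and `κ(p) ⊗_R S` is reduced for every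
minimal prime `p` of `trace_R(ω)`, then `trace_S(ω_S)` is radical. -/
theorem trace_isRadical_of_flat_local_ascent
    (R S : Type) [CommRing R] [CommRing S] [IsNoetherianRing R] [IsNoetherianRing S]
    [IsLocalRing R] [IsLocalRing S] [Algebra R S] [Module.Flat R S]
    (hloc : IsLocalHom (algebraMap R S))
    (hCM : IsCohenMacaulayLocal R)
    (ω : Type) [AddCommGroup ω] [Module R ω] (hω : IsCanonicalModuleLocal R ω)
    [IsLocalRing (S ⧸ (IsLocalRing.maximalIdeal R).map (algebraMap R S))]
    (hGor : IsGorensteinLocal (S ⧸ (IsLocalRing.maximalIdeal R).map (algebraMap R S)))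
    (hrad : (traceIdeal R ω).IsRadical)
    (hfib : ∀ (p : Ideal R) (hp : p.IsPrime), p ∈ (traceIdeal R ω).minimalPrimes →
      haveI := hp
      IsReduced (TensorProduct R
        (Localization.AtPrime p ⧸ IsLocalRing.maximalIdeal (Localization.AtPrime p)) S)) :
    (traceIdeal S (TensorProduct R S ω)).IsRadical := by
  haveI : Module.Finite R ω := hω.1
  rw [traceIdeal_baseChange]
  refine map_isRadical_of_isReduced _ ?_
  refine isReduced_tensor_quot_rad _ hrad ?_
  intro p hp
  haveI : p.IsPrime := hp.1.1
  exact isReduced_tensor_quot_of_fiber p (hfib p hp.1.1 hp)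
end

section
/- Let K be a field, R^(1) and R^(2) ℕ-graded K-algebras, d a positive integer, and x_i ∈ R^(i)_d a non-zerodivisor of R^(i) for i = 1,2. Then x_1 ⊗ x_2 ∈ (R^(1)#R^(2))_d is a non-zerodivisor of the Segre product R^(1)#R^(2). -/
open scoped TensorProduct


theorem segre_tmul_nonZeroDivisor'
    (K A B : Type) [Field K] [CommRing A] [CommRing B] [Algebra K A] [Algebra K B]
    (x₁ : A) (hx₁' : x₁ ∈ nonZeroDivisors A)
    (x₂ : B) (hx₂' : x₂ ∈ nonZeroDivisors B) :
    ∀ α : A ⊗[K] B, (x₁ ⊗ₜ[K] x₂) * α = 0 → α = 0 := by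
  have hf : Function.Injective (LinearMap.mulLeft K x₁) := by
    intro a b hab
    have : (a - b) * x₁ = 0 := by
      simp only [LinearMap.mulLeft_apply] at hab
      rw [sub_mul, mul_comm a, mul_comm b, hab, sub_self]
    simpa [sub_eq_zero] using hx₁'.2 _ this
  have hg : Function.Injective (LinearMap.mulLeft K x₂) := by
    intro a b hab
    have : (a - b) * x₂ = 0 := by
      simp only [LinearMap.mulLeft_apply] at hab
      rw [sub_mul, mul_comm a, mul_comm b, hab, sub_self]
    simpa [sub_eq_zero] using hx₂'.2 _ this
  have hmap : Function.Injective
      (TensorProduct.map (LinearMap.mulLeft K x₁) (LinearMap.mulLeft K x₂)) := by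
    rw [← LinearMap.rTensor_comp_lTensor]
    exact (Module.Flat.rTensor_preserves_injective_linearMap _ hf).comp
      (Module.Flat.lTensor_preserves_injective_linearMap _ hg)
  have key : ∀ α : A ⊗[K] B,
      TensorProduct.map (LinearMap.mulLeft K x₁) (LinearMap.mulLeft K x₂) α
      = (x₁ ⊗ₜ[K] x₂) * α := by
    intro α
    induction α using TensorProduct.induction_on with
    | zero => simp
    | tmul a b => simp [Algebra.TensorProduct.tmul_mul_tmul]
    | add u v hu hv => rw [map_add, hu, hv, mul_add]
  intro α hα
  apply hmap
  rw [key, hα, map_zero]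

/-- The Segre product `A # B` of two ℕ-graded `K`-algebras, as the `K`-submodule
`⊕_m A_m ⊗ B_m` of `A ⊗_K B`. -/
noncomputable def segreSubmodule₂ (K A B : Type) [Field K] [CommRing A] [CommRing B]
    [Algebra K A] [Algebra K B] (𝒜 : ℕ → Submodule K A) (ℬ : ℕ → Submodule K B) :
    Submodule K (A ⊗[K] B) :=
  ⨆ m : ℕ, Submodule.span K
    {y : A ⊗[K] B | ∃ a ∈ 𝒜 m, ∃ b ∈ ℬ m, y = a ⊗ₜ[K] b}

/-- If `x₁ ∈ A_d` and `x₂ ∈ B_d` (`d > 0`) are non-zerodivisors of the ℕ-graded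
`K`-algebras `A` and `B` respectively, then `x₁ ⊗ x₂` is a non-zerodivisor of the
Segre product `A # B`. -/
theorem segre_tmul_nonZeroDivisor
    (K A B : Type) [Field K] [CommRing A] [CommRing B] [Algebra K A] [Algebra K B]
    (𝒜 : ℕ → Submodule K A) [GradedAlgebra 𝒜] (h𝒜0 : 𝒜 0 = (1 : Submodule K A))
    (ℬ : ℕ → Submodule K B) [GradedAlgebra ℬ] (hℬ0 : ℬ 0 = (1 : Submodule K B))
    (d : ℕ) (hd : 0 < d)
    (x₁ : A) (hx₁ : x₁ ∈ 𝒜 d) (hx₁' : x₁ ∈ nonZeroDivisors A)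
    (x₂ : B) (hx₂ : x₂ ∈ ℬ d) (hx₂' : x₂ ∈ nonZeroDivisors B) :
    ∀ α ∈ segreSubmodule₂ K A B 𝒜 ℬ, (x₁ ⊗ₜ[K] x₂) * α = 0 → α = 0 := by
  intro α _ hα
  exact segre_tmul_nonZeroDivisor' K A B x₁ hx₁' x₂ hx₂' α hα
end

section
/- Let G be the cycle graph of odd length n = 2ℓ+1 with ℓ ≥ 4, vertices v_0,...,v_{2ℓ}. Define μ ∈ ℤ^{V ∪ {−∞}} by μ(x) = 1 if x ∈ {v_2, v_4, ..., v_{2ℓ−2}, −∞} and μ(x) = 0 otherwise. Then μ ∈ T^(0) but μ cannot be written as η + ζ with η ∈ T^(1) and ζ ∈ T^(−1), where T^(n) = {μ ∈ ℤ^{V∪{−∞}} : μ(v) ≥ n for all v ∈ V, μ(v_i)+μ(v_{i+1})+n ≤ μ(−∞) for all edges (indices mod 2ℓ+1), and Σ_{v∈V} μ(v) + n ≤ ℓ·μ(−∞)}. Consequently the monomial T^μ lies in √(trace(ω)) but not in trace(ω), so the Ehrhart ring of the stable set polytope of G is not CTR. -/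
/-- For the cycle graph with vertex set `Fin (2ℓ+1)` (edges between consecutive indices
mod `2ℓ+1`), `cycleT ℓ n` is the set `T^(n)` of pairs `(μ, c)` (with `c = μ(-∞)`) such that
`μ(v) ≥ n` for all vertices, `μ(v_i) + μ(v_{i+1}) + n ≤ μ(-∞)` for all edges, and
`Σ_v μ(v) + n ≤ ℓ·μ(-∞)`. -/
def cycleT (l : ℕ) (n : ℤ) : Set ((Fin (2 * l + 1) → ℤ) × ℤ) :=
  {μ | (∀ v, n ≤ μ.1 v) ∧
    (∀ i : Fin (2 * l + 1), μ.1 i + μ.1 (i + 1) + n ≤ μ.2) ∧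
    (∑ v, μ.1 v) + n ≤ (l : ℤ) * μ.2}

lemma sum_mu (l : ℕ) (hl : 1 ≤ l) :
    ∑ v : Fin (2 * l + 1),
      (if Even v.val ∧ v.val ≠ 0 ∧ v.val ≠ 2 * l then (1 : ℤ) else 0) = (l : ℤ) - 1 := by
  rw [Fin.sum_univ_eq_sum_range (fun i => if Even i ∧ i ≠ 0 ∧ i ≠ 2 * l then (1 : ℤ) else 0)]
  rw [Finset.sum_boole]
  have hfil : (Finset.range (2 * l + 1)).filter (fun i => Even i ∧ i ≠ 0 ∧ i ≠ 2 * l) =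
      (Finset.range (l - 1)).image (fun k => 2 * k + 2) := by
    ext i
    simp only [Finset.mem_filter, Finset.mem_range, Finset.mem_image, Nat.even_iff]
    constructor
    · rintro ⟨h1, h2, h3, h4⟩
      exact ⟨i / 2 - 1, by omega, by omega⟩
    · rintro ⟨k, hk, rfl⟩
      omega
  rw [hfil, Finset.card_image_of_injective _ (fun a b h => by omega), Finset.card_range]
  omega

lemma edge_mu (l : ℕ) (i : Fin (2 * l + 1)) :
    (if Even i.val ∧ i.val ≠ 0 ∧ i.val ≠ 2 * l then (1 : ℤ) else 0) +
    (if Even (i + 1).val ∧ (i + 1).val ≠ 0 ∧ (i + 1).val ≠ 2 * l then (1 : ℤ) else 0) ≤ 1 := by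
  rcases eq_or_ne i (Fin.last (2 * l)) with h | h
  · subst h
    have h0 : (Fin.last (2 * l) + 1 : Fin (2 * l + 1)) = 0 := Fin.last_add_one _
    rw [h0]
    simp
  · have hv : ((i + 1 : Fin (2 * l + 1)).val) = i.val + 1 := by
      rw [Fin.val_add_one, if_neg h]
    rw [hv]
    simp only [Nat.even_iff]
    have := i.isLt
    split_ifs <;> omega

/-- For the odd cycle of length `2ℓ+1` with `ℓ ≥ 4`, the element `μ` with `μ = 1` exactly on
`v_2, v_4, …, v_{2ℓ-2}` and at `-∞`, and `0` elsewhere, lies in `T^(0)`, satisfies the strict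
inequality `Σ_v μ(v) < ℓ·μ(-∞)` (so `T^μ ∈ √trace(ω)`), but cannot be written as `η + ζ`
with `η ∈ T^(1)`, `ζ ∈ T^(-1)` (so `T^μ ∉ trace(ω)` and the Ehrhart ring of the stable set
polytope of the cycle is not CTR). -/
theorem cycle_graph_mu_in_radical_not_in_trace (l : ℕ) (hl : 4 ≤ l) :
    ((fun v : Fin (2 * l + 1) =>
        if Even v.val ∧ v.val ≠ 0 ∧ v.val ≠ 2 * l then (1 : ℤ) else 0), (1 : ℤ)) ∈ cycleT l 0 ∧
    (∑ v : Fin (2 * l + 1),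
        (if Even v.val ∧ v.val ≠ 0 ∧ v.val ≠ 2 * l then (1 : ℤ) else 0)) < (l : ℤ) * 1 ∧
    ¬ (∃ η ∈ cycleT l 1, ∃ ζ ∈ cycleT l (-1),
        (((fun v : Fin (2 * l + 1) =>
          if Even v.val ∧ v.val ≠ 0 ∧ v.val ≠ 2 * l then (1 : ℤ) else 0), (1 : ℤ)) :
            (Fin (2 * l + 1) → ℤ) × ℤ) = η + ζ) := by
  have hl1 : 1 ≤ l := by omega
  have hsum := sum_mu l hl1
  have h4 : (4 : ℤ) ≤ (l : ℤ) := by exact_mod_cast hl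
  refine ⟨⟨fun v => ?_, fun i => ?_, ?_⟩, ?_, ?_⟩
  · simp only
    split_ifs <;> norm_num
  · simpa using edge_mu l i
  · simp only [add_zero, mul_one]
    rw [hsum]
    omega
  · rw [hsum]
    omega
  · rintro ⟨η, ⟨hη1, hη2, hη3⟩, ζ, ⟨hζ1, hζ2, hζ3⟩, heq⟩
    have h2 : η.2 + ζ.2 = 1 := by
      have := congrArg Prod.snd heq
      simpa using this.symm
    have hfv : ∀ v : Fin (2 * l + 1), η.1 v + ζ.1 v =
        (if Even v.val ∧ v.val ≠ 0 ∧ v.val ≠ 2 * l then (1 : ℤ) else 0) := by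
      intro v
      have := congrArg (fun p : (Fin (2 * l + 1) → ℤ) × ℤ => p.1 v) heq
      simpa using this.symm
    have hηsum_lb : (2 * (l : ℤ) + 1) ≤ ∑ v, η.1 v := by
      calc (2 * (l : ℤ) + 1) = ∑ _v : Fin (2 * l + 1), (1 : ℤ) := by
            simp [Finset.card_univ]
        _ ≤ ∑ v, η.1 v := Finset.sum_le_sum fun v _ => hη1 v
    have hη3ge : 3 ≤ η.2 := by
      by_contra hc
      push_neg at hc
      have hmul : (l : ℤ) * η.2 ≤ (l : ℤ) * 2 :=
        mul_le_mul_of_nonneg_left (by omega) (by positivity)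
      linarith [hη3]
    have hζub : ζ.2 ≤ -2 := by omega
    have hζlb : -2 ≤ ζ.2 := by
      by_contra hc
      push_neg at hc
      have hall : ∀ i : Fin (2 * l + 1), ζ.1 i = -1 := by
        intro i
        have he := hζ2 i
        have ha := hζ1 i
        have hb := hζ1 (i + 1)
        omega
      have hsζ : ∑ v, ζ.1 v = -(2 * (l : ℤ) + 1) := by
        rw [Finset.sum_congr rfl (fun v _ => hall v)]
        simp [Finset.card_univ]
      have hmul : (l : ℤ) * ζ.2 ≤ (l : ℤ) * (-3) :=
        mul_le_mul_of_nonneg_left (by omega) (by positivity)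
      rw [hsζ] at hζ3
      linarith
    have hζ2eq : ζ.2 = -2 := le_antisymm hζub hζlb
    have hη2eq : η.2 = 3 := by omega
    have hηone : ∀ v : Fin (2 * l + 1), η.1 v = 1 := by
      intro v
      have he := hη2 v
      have ha := hη1 v
      have hb := hη1 (v + 1)
      rw [hη2eq] at he
      omega
    have hsη : ∑ v, η.1 v = 2 * (l : ℤ) + 1 := by
      rw [Finset.sum_congr rfl (fun v _ => hηone v)]
      simp [Finset.card_univ]
    have hsζ : ∑ v, ζ.1 v = (l : ℤ) - 1 - (2 * (l : ℤ) + 1) := by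
      have htot : ∑ v, (η.1 v + ζ.1 v) = (l : ℤ) - 1 := by
        rw [Finset.sum_congr rfl (fun v _ => hfv v)]
        exact hsum
      rw [Finset.sum_add_distrib, hsη] at htot
      linarith
    rw [hsζ, hζ2eq] at hζ3
    linarith
end
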